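/- arXiv:1305.5569 — 2 statements merged into one kernel-verified Lean document; each statement's English description precedes it below -/
import Mathlib

section
/- Let σ ≤ τ with |τ| − |σ| = 2 in the permutation pattern poset. Then the interval [σ,τ] has exactly k elements of rank 1 (i.e., elements π with σ < π < τ), where k is the number of runs of τ consisting entirely of removable letters. -/
open scoped Classical

/-- The set of all (finite) permutations, as patterns: a permutation of length `n`
together with its length. -/
abbrev PermPt := Σ n : ℕ, Equiv.Perm (Fin n)

/-- Pattern containment order: `σ` occurs in `τ` if there is a strictly monotone
choice of positions on which `τ` is order-isomorphic to `σ`. -/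
def ple (σ τ : PermPt) : Prop :=
  ∃ f : Fin σ.1 → Fin τ.1, StrictMono f ∧
    ∀ a b : Fin σ.1, σ.2 a ≤ σ.2 b ↔ τ.2 (f a) ≤ τ.2 (f b)

/-- Strict pattern containment. -/
def plt (σ τ : PermPt) : Prop := ple σ τ ∧ ¬ ple τ σ

/-- Direct sum of permutations. -/
def pds {m n : ℕ} (α : Equiv.Perm (Fin m)) (β : Equiv.Perm (Fin n)) :
    Equiv.Perm (Fin (m + n)) :=
  finSumFinEquiv.symm.trans ((Equiv.sumCongr α β).trans finSumFinEquiv)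

/-- Skew sum of permutations. -/
def pss {m n : ℕ} (α : Equiv.Perm (Fin m)) (β : Equiv.Perm (Fin n)) :
    Equiv.Perm (Fin (m + n)) :=
  finSumFinEquiv.symm.trans
    (((Equiv.sumCongr α β).trans (Equiv.sumComm (Fin m) (Fin n))).trans
      (finSumFinEquiv.trans (finCongr (Nat.add_comm n m))))

/-- Direct sum, as an operation on `PermPt`. -/
def pdsP (a b : PermPt) : PermPt := ⟨a.1 + b.1, pds a.2 b.2⟩

/-- Skew sum, as an operation on `PermPt`. -/
def pssP (a b : PermPt) : PermPt := ⟨a.1 + b.1, pss a.2 b.2⟩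

/-- The empty permutation. -/
def pempty : PermPt := ⟨0, 1⟩

/-- The permutation `1` of length one. -/
def pone : PermPt := ⟨1, 1⟩

/-- A permutation is decomposable if it is the direct sum of two nonempty
permutations, i.e. some proper nonempty initial segment of positions is mapped
to the corresponding initial segment of values. -/
def Decomp {n : ℕ} (σ : Equiv.Perm (Fin n)) : Prop :=
  ∃ m : ℕ, 0 < m ∧ m < n ∧ ∀ i : Fin n, (i : ℕ) < m → (σ i : ℕ) < m

/-- Disconnectedness of a set of permutations under pattern containment:
it splits into two nonempty parts with no comparabilities between them. -/
def Disconn (S : Set PermPt) : Prop :=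
  ∃ A B : Set PermPt, A ∪ B = S ∧ A.Nonempty ∧ B.Nonempty ∧
    ∀ x ∈ A, ∀ y ∈ B, ¬ ple x y ∧ ¬ ple y x
/-- Deleting the letter in position `i` of `τ` and flattening. -/
def deleteAt {n : ℕ} (τ : Equiv.Perm (Fin (n + 1))) (i : Fin (n + 1)) :
    Equiv.Perm (Fin n) :=
  Equiv.removeNone (((finSuccEquiv' i).symm.trans (τ : Fin (n+1) ≃ Fin (n+1))).trans
    (finSuccEquiv' (τ i)))

/-- The positions `lo ≤ k ≤ hi` form a run of `τ`: the values on these positions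
are consecutive increasing `a, a+1, …` or consecutive decreasing `a, a-1, …`. -/
def IsRunOn {n : ℕ} (τ : Equiv.Perm (Fin n)) (lo hi : Fin n) : Prop :=
  lo ≤ hi ∧
  ((∀ k l : Fin n, lo ≤ k → k ≤ l → l ≤ hi →
      (τ l : ℕ) = (τ k : ℕ) + ((l : ℕ) - (k : ℕ))) ∨
   (∀ k l : Fin n, lo ≤ k → k ≤ l → l ≤ hi →
      (τ k : ℕ) = (τ l : ℕ) + ((l : ℕ) - (k : ℕ))))

/-- Positions `i` and `j` lie in a common run of `τ`. -/
def SameRun {n : ℕ} (τ : Equiv.Perm (Fin n)) (i j : Fin n) : Prop :=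
  ∃ lo hi : Fin n, IsRunOn τ lo hi ∧ lo ≤ i ∧ i ≤ hi ∧ lo ≤ j ∧ j ≤ hi


/-!
Every rank-one element of `[σ, τ]` is `τ` with one letter deleted, so it suffices to show
that deleting positions `i` and `j` gives the same permutation exactly when `i` and `j` lie in
a common run. Two neighbouring letters with consecutive values compare alike with every other
letter, so deleting either gives the same result. Conversely, if the deletions at `i < j` agree,
then at each position `p` between them `τ (p + 1)` and `τ p` flatten to the same letter, so
they have consecutive values; as `τ` is injective, all these unit steps go in one direction.
-/

theorem Equiv.Perm.eq_of_le_iff_le {α : Type*} [LinearOrder α] [WellFoundedLT α]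
    {π ρ : Equiv.Perm α} (h : ∀ a b, π a ≤ π b ↔ ρ a ≤ ρ b) : π = ρ := by
  let e : α ≃o α := ⟨π.symm.trans ρ, fun {x y} => by simpa using (h (π.symm x) (π.symm y)).symm⟩
  have he : ⇑e = id := congrArg (⇑) (Subsingleton.elim e (OrderIso.refl α))
  ext a
  simpa [e] using (congrFun he (π a)).symm

theorem Fin.exists_eq_succAbove_of_strictMono {m : ℕ} {f : Fin (m + 1) → Fin (m + 2)}
    (hf : StrictMono f) : ∃ j : Fin (m + 2), f = j.succAbove := by
  have hns : ¬ Function.Surjective f := fun hs => by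
    have := Fintype.card_le_of_surjective f hs
    simp at this
  obtain ⟨j, hj⟩ := not_forall.mp hns
  have hcard : ({j}ᶜ : Finset (Fin (m + 2))).card = m + 1 := by
    rw [Finset.card_compl]; simp
  refine ⟨j, ?_⟩
  rw [Finset.orderEmbOfFin_unique hcard (fun x => by simpa using fun h => hj ⟨x, h⟩) hf,
    Finset.orderEmbOfFin_unique hcard (fun x => by simp [Fin.succAbove_ne j x])
      (Fin.strictMono_succAbove j)]

theorem Fin.val_succAbove_eq_or {n : ℕ} (p : Fin (n + 1)) (x : Fin n) :
    (p.succAbove x : ℕ) = x ∨ (p.succAbove x : ℕ) = x + 1 := by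
  rcases lt_or_ge x.castSucc p with h | h
  · simp [Fin.succAbove_of_castSucc_lt _ _ h]
  · simp [Fin.succAbove_of_le_castSucc _ _ h]

theorem Fin.succAbove_castSucc_eq_succAbove_succ {n : ℕ} {p a : Fin n} (h : a ≠ p) :
    p.castSucc.succAbove a = p.succ.succAbove a := by
  rcases h.lt_or_gt with h | h
  · rw [Fin.succAbove_castSucc_of_lt _ _ h, Fin.succAbove_succ_of_le _ _ h.le]
  · rw [Fin.succAbove_castSucc_of_le _ _ h.le, Fin.succAbove_succ_of_lt _ _ h]

theorem Set.injOn_preimage_singleton {α β : Type*} {f : α → β} {s : Set β}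
    (hs : s ⊆ Set.range f) : Set.InjOn (fun y => f ⁻¹' {y}) s := by
  rintro _ hx _ - hxy
  obtain ⟨a, rfl⟩ := hs hx
  exact (Set.ext_iff.mp hxy a).mp rfl

theorem Nat.unit_steps_same_direction {f : ℕ → ℕ} {i j : ℕ} (hij : i < j)
    (hinj : Set.InjOn f (Set.Icc i j))
    (hstep : ∀ q, i ≤ q → q < j → f (q + 1) = f q + 1 ∨ f q = f (q + 1) + 1) :
    (∀ q, i ≤ q → q < j → f (q + 1) = f q + 1) ∨
    (∀ q, i ≤ q → q < j → f q = f (q + 1) + 1) := by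
  induction j, hij using Nat.le_induction with
  | base =>
    rcases hstep i le_rfl (Nat.lt_add_one i) with h | h
    · exact .inl fun q hq hq' => (show q = i by omega) ▸ h
    · exact .inr fun q hq hq' => (show q = i by omega) ▸ h
  | succ j hij ih =>
    have hinj' : Set.InjOn f (Set.Icc i j) :=
      hinj.mono (Set.Icc_subset_Icc_right (Nat.le_succ j))
    -- two opposite consecutive steps would revisit the value `f (j - 1)`
    have hback : f (j + 1) ≠ f (j - 1) := fun h => by
      have := hinj ⟨by omega, le_rfl⟩ ⟨by omega, by omega⟩ h
      omega
    have hlast := hstep j (by omega) (Nat.lt_add_one j)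
    rcases ih hinj' (fun q hq hq' => hstep q hq (by omega)) with hup | hdown
    · have hprev := hup (j - 1) (by omega) (by omega)
      rw [Nat.sub_add_cancel (by omega)] at hprev
      refine .inl fun q hq hq' => (Nat.lt_or_ge q j).elim (hup q hq) fun hqj => ?_
      obtain rfl : q = j := by omega
      omega
    · have hprev := hdown (j - 1) (by omega) (by omega)
      rw [Nat.sub_add_cancel (by omega)] at hprev
      refine .inr fun q hq hq' => (Nat.lt_or_ge q j).elim (hdown q hq) fun hqj => ?_
      obtain rfl : q = j := by omega
      omega

theorem Nat.apply_eq_add_sub_of_unit_steps_up {f : ℕ → ℕ} {i j : ℕ}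
    (hstep : ∀ q, i ≤ q → q < j → f (q + 1) = f q + 1) :
    ∀ k l, i ≤ k → k ≤ l → l ≤ j → f l = f k + (l - k) := by
  intro k l hk hkl
  induction l, hkl using Nat.le_induction with
  | base => intro _; omega
  | succ l hkl ih =>
    intro hl
    have := hstep l (by omega) (by omega)
    have := ih (by omega)
    omega

theorem Nat.apply_eq_add_sub_of_unit_steps_down {f : ℕ → ℕ} {i j : ℕ}
    (hstep : ∀ q, i ≤ q → q < j → f q = f (q + 1) + 1) :
    ∀ k l, i ≤ k → k ≤ l → l ≤ j → f k = f l + (l - k) := by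
  intro k l hk hkl
  induction l, hkl using Nat.le_induction with
  | base => intro _; omega
  | succ l hkl ih =>
    intro hl
    have := hstep l (by omega) (by omega)
    have := ih (by omega)
    omega

theorem succAbove_deleteAt {m : ℕ} (τ : Equiv.Perm (Fin (m + 1))) (i : Fin (m + 1))
    (k : Fin m) : (τ i).succAbove (deleteAt τ i k) = τ (i.succAbove k) := by
  obtain ⟨z, hz⟩ := Fin.exists_succAbove_eq (x := τ (i.succAbove k)) (y := τ i)
    (τ.injective.ne (Fin.succAbove_ne i k))
  have hsome : some (deleteAt τ i k) = some z :=
    Equiv.removeNone_some _ ⟨z, by simp [← hz, finSuccEquiv'_succAbove]⟩ |>.trans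
      (by simp [← hz, finSuccEquiv'_succAbove])
  rw [Option.some_injective _ hsome, hz]

theorem deleteAt_eq_iff {m : ℕ} (τ : Equiv.Perm (Fin (m + 1))) (i : Fin (m + 1))
    (π : Equiv.Perm (Fin m)) :
    deleteAt τ i = π ↔ ∀ a b, π a ≤ π b ↔ τ (i.succAbove a) ≤ τ (i.succAbove b) := by
  have hdel : ∀ a b, deleteAt τ i a ≤ deleteAt τ i b ↔ τ (i.succAbove a) ≤ τ (i.succAbove b) :=
    fun a b => by rw [← succAbove_deleteAt, ← succAbove_deleteAt, Fin.succAbove_le_succAbove_iff]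
  refine ⟨fun h => h ▸ hdel, fun h => Equiv.Perm.eq_of_le_iff_le fun a b => ?_⟩
  rw [hdel, h]

theorem ple_deleteAt {m : ℕ} (τ : Equiv.Perm (Fin (m + 1))) (i : Fin (m + 1)) :
    ple ⟨m, deleteAt τ i⟩ ⟨m + 1, τ⟩ :=
  ⟨i.succAbove, Fin.strictMono_succAbove i, (deleteAt_eq_iff τ i _).mp rfl⟩

theorem exists_eq_deleteAt_of_ple {m : ℕ} {π : Equiv.Perm (Fin (m + 1))}
    {τ : Equiv.Perm (Fin (m + 2))} (h : ple ⟨m + 1, π⟩ ⟨m + 2, τ⟩) : ∃ j, π = deleteAt τ j := by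
  obtain ⟨f, hf, hle⟩ := h
  obtain ⟨j, rfl⟩ := Fin.exists_eq_succAbove_of_strictMono hf
  exact ⟨j, ((deleteAt_eq_iff τ j π).mpr hle).symm⟩

theorem fst_le_of_ple {x y : PermPt} (h : ple x y) : x.1 ≤ y.1 := by
  obtain ⟨f, hf, -⟩ := h
  simpa using Fintype.card_le_of_injective f hf.injective

theorem plt_of_ple_of_fst_lt {x y : PermPt} (h : ple x y) (hlt : x.1 < y.1) : plt x y :=
  ⟨h, fun h' => (fst_le_of_ple h').not_gt hlt⟩

def ConsecutiveValuesAt {n : ℕ} (τ : Equiv.Perm (Fin (n + 1))) (p : Fin n) : Prop :=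
  (τ p.succ : ℕ) = τ p.castSucc + 1 ∨ (τ p.castSucc : ℕ) = τ p.succ + 1

theorem deleteAt_castSucc_eq_deleteAt_succ {n : ℕ} (τ : Equiv.Perm (Fin (n + 2)))
    (p : Fin (n + 1)) (hadj : ConsecutiveValuesAt τ p) :
    deleteAt τ p.castSucc = deleteAt τ p.succ := by
  have hcmp : ∀ b ≠ p,
      (τ p.castSucc ≤ τ (p.succ.succAbove b) ↔ τ p.succ ≤ τ (p.succ.succAbove b)) ∧
      (τ (p.succ.succAbove b) ≤ τ p.castSucc ↔ τ (p.succ.succAbove b) ≤ τ p.succ) := by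
    intro b hb
    have h1 := Fin.val_ne_of_ne (τ.injective.ne (Fin.succAbove_ne p.succ b))
    have h2 := Fin.val_ne_of_ne (τ.injective.ne (Fin.succAbove_ne p.castSucc b))
    rw [Fin.succAbove_castSucc_eq_succAbove_succ hb] at h2
    unfold ConsecutiveValuesAt at hadj
    simp only [Fin.le_def]
    omega
  refine (deleteAt_eq_iff τ _ _).mpr fun a b => ?_
  rw [(deleteAt_eq_iff τ p.succ _).mp rfl]
  rcases eq_or_ne a p with ha | ha <;> rcases eq_or_ne b p with hb | hb
  · simp only [ha, hb, le_refl]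
  · rw [ha, Fin.succAbove_castSucc_eq_succAbove_succ hb, Fin.succAbove_succ_self,
      Fin.succAbove_castSucc_self]
    exact (hcmp b hb).1
  · rw [hb, Fin.succAbove_castSucc_eq_succAbove_succ ha, Fin.succAbove_succ_self,
      Fin.succAbove_castSucc_self]
    exact (hcmp a ha).2
  · rw [Fin.succAbove_castSucc_eq_succAbove_succ ha, Fin.succAbove_castSucc_eq_succAbove_succ hb]

theorem IsRunOn.consecutiveValuesAt {n : ℕ} {τ : Equiv.Perm (Fin (n + 1))} {lo hi : Fin (n + 1)}
    (hrun : IsRunOn τ lo hi) {p : Fin n} (hlo : lo ≤ p.castSucc) (hhi : p.succ ≤ hi) :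
    ConsecutiveValuesAt τ p := by
  have hp : p.castSucc ≤ p.succ := Fin.castSucc_le_succ p
  rcases hrun.2 with hup | hdown
  · exact .inl (by simpa using hup _ _ hlo hp hhi)
  · exact .inr (by simpa using hdown _ _ hlo hp hhi)

theorem isRunOn_of_consecutiveValuesAt {n : ℕ} {τ : Equiv.Perm (Fin (n + 1))}
    {lo hi : Fin (n + 1)} (hlt : lo < hi)
    (hadj : ∀ p : Fin n, lo ≤ p.castSucc → p.succ ≤ hi → ConsecutiveValuesAt τ p) :
    IsRunOn τ lo hi := by
  let f : ℕ → ℕ := fun q => if h : q < n + 1 then τ ⟨q, h⟩ else 0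
  have hf' : ∀ q (h : q < n + 1), f q = τ ⟨q, h⟩ := fun q h => dif_pos h
  have hf : ∀ k : Fin (n + 1), f k = τ k := fun k => hf' k k.isLt
  have hinj : Set.InjOn f (Set.Icc lo hi) := fun a ha b hb hab => by
    have ha' : a < n + 1 := ha.2.trans_lt hi.isLt
    have hb' : b < n + 1 := hb.2.trans_lt hi.isLt
    rw [hf' a ha', hf' b hb'] at hab
    simpa using τ.injective (Fin.ext hab)
  have hstep : ∀ q, (lo : ℕ) ≤ q → q < hi → f (q + 1) = f q + 1 ∨ f q = f (q + 1) + 1 := by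
    intro q hq hq'
    have := hadj ⟨q, by omega⟩ (by simpa [Fin.le_def] using hq) (by simpa [Fin.le_def] using hq')
    rwa [hf' q (by omega), hf' (q + 1) (by omega)]
  refine ⟨hlt.le, ?_⟩
  rcases Nat.unit_steps_same_direction hlt hinj hstep with hup | hdown
  · exact .inl fun k l hk hkl hl => by
      simpa only [hf] using Nat.apply_eq_add_sub_of_unit_steps_up hup k l hk hkl hl
  · exact .inr fun k l hk hkl hl => by
      simpa only [hf] using Nat.apply_eq_add_sub_of_unit_steps_down hdown k l hk hkl hl

theorem IsRunOn.deleteAt_eq {n : ℕ} {τ : Equiv.Perm (Fin (n + 2))} {lo hi : Fin (n + 2)}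
    (hrun : IsRunOn τ lo hi) {k : Fin (n + 2)} (hlo : lo ≤ k) (hhi : k ≤ hi) :
    deleteAt τ k = deleteAt τ lo := by
  obtain ⟨d, hd⟩ := Nat.exists_eq_add_of_le (Fin.le_def.mp hlo)
  induction d generalizing k with
  | zero => congr; exact Fin.ext hd
  | succ d ih =>
    let p : Fin (n + 1) := ⟨lo + d, by omega⟩
    have hpk : p.succ = k := Fin.ext (by simp [p, hd]; omega)
    rw [← hpk, ← deleteAt_castSucc_eq_deleteAt_succ τ p
      (hrun.consecutiveValuesAt (by simp [Fin.le_def, p]) (hpk ▸ hhi))]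
    exact ih (by simp [Fin.le_def, p]) ((Fin.castSucc_le_succ p).trans (hpk ▸ hhi)) rfl

theorem consecutiveValuesAt_of_deleteAt_eq {n : ℕ} {τ : Equiv.Perm (Fin (n + 2))}
    {i j : Fin (n + 2)} (h : deleteAt τ i = deleteAt τ j) {p : Fin (n + 1)}
    (hi : i ≤ p.castSucc) (hj : p.succ ≤ j) : ConsecutiveValuesAt τ p := by
  have hsucc := succAbove_deleteAt τ i p
  have hcast := succAbove_deleteAt τ j p
  rw [Fin.succAbove_of_le_castSucc i p hi] at hsucc
  rw [Fin.succAbove_of_castSucc_lt j p (Fin.castSucc_lt_succ.trans_le hj), ← h] at hcast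
  have hne := Fin.val_ne_of_ne (τ.injective.ne (Fin.castSucc_lt_succ (i := p)).ne')
  have h1 := Fin.val_succAbove_eq_or (τ i) (deleteAt τ i p)
  have h2 := Fin.val_succAbove_eq_or (τ j) (deleteAt τ i p)
  rw [hsucc] at h1
  rw [hcast] at h2
  unfold ConsecutiveValuesAt
  omega

theorem sameRun_refl {n : ℕ} (τ : Equiv.Perm (Fin n)) (i : Fin n) : SameRun τ i i := by
  refine ⟨i, i, ⟨le_rfl, .inl fun k l hk hkl hl => ?_⟩, le_rfl, le_rfl, le_rfl, le_rfl⟩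
  obtain rfl := le_antisymm hkl (hl.trans hk)
  simp

theorem SameRun.symm {n : ℕ} {τ : Equiv.Perm (Fin n)} {i j : Fin n} (h : SameRun τ i j) :
    SameRun τ j i :=
  let ⟨lo, hi, hrun, hlo_i, hi_hi, hlo_j, hj_hi⟩ := h
  ⟨lo, hi, hrun, hlo_j, hj_hi, hlo_i, hi_hi⟩

theorem sameRun_of_deleteAt_eq_of_lt {n : ℕ} {τ : Equiv.Perm (Fin (n + 2))} {i j : Fin (n + 2)}
    (hij : i < j) (h : deleteAt τ i = deleteAt τ j) : SameRun τ i j :=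
  ⟨i, j, isRunOn_of_consecutiveValuesAt hij fun _ => consecutiveValuesAt_of_deleteAt_eq h,
    le_rfl, hij.le, hij.le, le_rfl⟩

theorem deleteAt_eq_iff_sameRun {n : ℕ} (τ : Equiv.Perm (Fin (n + 2))) (i j : Fin (n + 2)) :
    deleteAt τ i = deleteAt τ j ↔ SameRun τ i j := by
  refine ⟨fun h => ?_, fun ⟨lo, hi, hrun, hlo_i, hi_hi, hlo_j, hj_hi⟩ => ?_⟩
  · rcases lt_trichotomy i j with hij | rfl | hji
    · exact sameRun_of_deleteAt_eq_of_lt hij h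
    · exact sameRun_refl τ i
    · exact (sameRun_of_deleteAt_eq_of_lt hji h.symm).symm
  · rw [hrun.deleteAt_eq hlo_i hi_hi, hrun.deleteAt_eq hlo_j hj_hi]

theorem setOf_sameRun_eq_preimage_deleteAt {n : ℕ} (τ : Equiv.Perm (Fin (n + 2)))
    (i : Fin (n + 2)) : {j | SameRun τ i j} = deleteAt τ ⁻¹' {deleteAt τ i} := by
  ext j
  simp [← deleteAt_eq_iff_sameRun, eq_comm]

theorem setOf_rank_one_eq_image_deleteAt {n : ℕ} (σ : Equiv.Perm (Fin n))
    (τ : Equiv.Perm (Fin (n + 2))) :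
    {π : Equiv.Perm (Fin (n + 1)) | plt ⟨n, σ⟩ ⟨n + 1, π⟩ ∧ plt ⟨n + 1, π⟩ ⟨n + 2, τ⟩} =
      deleteAt τ '' {i | ple ⟨n, σ⟩ ⟨n + 1, deleteAt τ i⟩} := by
  ext π
  constructor
  · rintro ⟨⟨hσπ, -⟩, hπτ, -⟩
    obtain ⟨j, rfl⟩ := exists_eq_deleteAt_of_ple hπτ
    exact ⟨j, hσπ, rfl⟩
  · rintro ⟨j, hj, rfl⟩
    exact ⟨plt_of_ple_of_fst_lt hj (Nat.lt_add_one n),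
      plt_of_ple_of_fst_lt (ple_deleteAt τ j) (Nat.lt_add_one _)⟩

theorem setOf_runs_eq_image_fibres_deleteAt {n : ℕ} (τ : Equiv.Perm (Fin (n + 2)))
    (P : Equiv.Perm (Fin (n + 1)) → Prop) :
    {C : Set (Fin (n + 2)) | ∃ i, C = {j | SameRun τ i j} ∧ ∀ j ∈ C, P (deleteAt τ j)} =
      (fun π => deleteAt τ ⁻¹' {π}) '' (deleteAt τ '' {i | P (deleteAt τ i)}) := by
  ext C
  simp only [setOf_sameRun_eq_preimage_deleteAt, Set.image_image, Set.mem_image, Set.mem_ofPred]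
  constructor
  · rintro ⟨i, rfl, hall⟩
    exact ⟨i, hall i rfl, rfl⟩
  · rintro ⟨i, hi, rfl⟩
    exact ⟨i, rfl, fun j hj => by rwa [Set.mem_ofPred.mp hj]⟩

theorem rank_two_interval_count_general (n : ℕ)
    (σ : Equiv.Perm (Fin n)) (τ : Equiv.Perm (Fin (n + 2))) :
    Set.ncard {π : Equiv.Perm (Fin (n + 1)) |
        plt ⟨n, σ⟩ ⟨n + 1, π⟩ ∧ plt ⟨n + 1, π⟩ ⟨n + 2, τ⟩} =
    Set.ncard {C : Set (Fin (n + 2)) | ∃ i : Fin (n + 2),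
        C = {j | SameRun τ i j} ∧
        ∀ j ∈ C, ple ⟨n, σ⟩ ⟨n + 1, deleteAt τ j⟩} := by
  rw [setOf_rank_one_eq_image_deleteAt,
    setOf_runs_eq_image_fibres_deleteAt τ (ple ⟨n, σ⟩ ⟨n + 1, ·⟩),
    (Set.injOn_preimage_singleton (Set.image_subset_range _ _)).ncard_image]

/-- In an interval `[σ,τ]` of rank 2, the number of elements of rank 1 equals
the number of runs of `τ` consisting entirely of removable letters (runs being
the equivalence classes of the `SameRun` relation). -/
theorem rank_two_interval_count (n : ℕ)
    (σ : Equiv.Perm (Fin n)) (τ : Equiv.Perm (Fin (n + 2)))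
    (h : ple ⟨n, σ⟩ ⟨n + 2, τ⟩) :
    Set.ncard {π : Equiv.Perm (Fin (n + 1)) |
        plt ⟨n, σ⟩ ⟨n + 1, π⟩ ∧ plt ⟨n + 1, π⟩ ⟨n + 2, τ⟩} =
    Set.ncard {C : Set (Fin (n + 2)) | ∃ i : Fin (n + 2),
        C = {j | SameRun τ i j} ∧
        ∀ j ∈ C, ple ⟨n, σ⟩ ⟨n + 1, deleteAt τ j⟩} :=
  rank_two_interval_count_general n σ τ
end

section
/- Suppose (σ,τ) is a disconnected open interval in the pattern poset. Then for any permutation α, all four intervals (α⊕σ, α⊕τ), (α⊖σ, α⊖τ), (σ⊕α, τ⊕α), and (σ⊖α, τ⊖α) are disconnected. -/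
open scoped Classical

/-!
Pattern containment is a partial order: an embedding between permutations of the same length is
the identity. Split the disconnected interval `(σ, τ)` into a part `X` and its complement with no
comparabilities between them, choosing `X` so that `σ ⊕ 1 ∉ X`. Then no element of `X` lies above
`σ ⊕ 1`, and `π ⊕ 1 < τ` fails for every `π ∈ X`. An element of `(σ ⊕ α, τ ⊕ α)` comparable with
some `π ⊕ α`, `π ∈ X`, is a direct sum `ρ ⊕ α'` with `α'` contained in `α`; comparing the blocks of
the two direct sums forces `α' = α` with `ρ` comparable with `π`, hence `ρ ∈ X`, except in the
boundary case `π ⊕ 1 = τ`, where the element is `π ⊕ α` itself. So `X ⊕ α` is a union of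
components of `(σ ⊕ α, τ ⊕ α)` missing the elements `π ⊕ α` with `π ∉ X`. Complement and reverse
are automorphisms of the pattern order turning `a ⊕ b` into `aᶜ ⊖ bᶜ` and `a ⊖ b` into
`bʳ ⊕ aʳ`; they carry this case to the other three.
-/

lemma ple_refl (a : PermPt) : ple a a := ⟨id, strictMono_id, fun _ _ => Iff.rfl⟩

lemma ple_trans {a b c : PermPt} (hab : ple a b) (hbc : ple b c) : ple a c := by
  obtain ⟨f, hf, hfab⟩ := hab
  obtain ⟨g, hg, hgbc⟩ := hbc
  exact ⟨g ∘ f, hg.comp hf, fun i j => (hfab i j).trans (hgbc (f i) (f j))⟩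

lemma len_le_of_ple {a b : PermPt} (h : ple a b) : a.1 ≤ b.1 := by
  obtain ⟨f, hf, -⟩ := h
  simpa using Fintype.card_le_of_injective f hf.injective

lemma Equiv.Perm.eq_of_le_iff_le_s8 {n : ℕ} {p q : Equiv.Perm (Fin n)}
    (h : ∀ i j, p i ≤ p j ↔ q i ≤ q j) : p = q := by
  have hg : StrictMono (p.symm.trans q) := fun x y hxy => by
    change q (p.symm x) < q (p.symm y)
    rwa [← not_le, ← h, Equiv.apply_symm_apply, Equiv.apply_symm_apply, not_le]
  have hid : ⇑(p.symm.trans q) = id := le_antisymm hg.le_id hg.id_le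
  exact Equiv.ext fun i => by simpa using (congr_fun hid (p i)).symm

lemma eq_of_ple_of_len_le {a b : PermPt} (h : ple a b) (hlen : b.1 ≤ a.1) : a = b := by
  obtain ⟨n, p⟩ := a
  obtain ⟨m, q⟩ := b
  obtain rfl : n = m := le_antisymm (len_le_of_ple h) hlen
  obtain ⟨f, hf, hpq⟩ := h
  have hfid : f = id := le_antisymm hf.le_id hf.id_le
  subst hfid
  obtain rfl := Equiv.Perm.eq_of_le_iff_le_s8 hpq
  rfl

lemma plt_iff_ple_and_len_lt {a b : PermPt} : plt a b ↔ ple a b ∧ a.1 < b.1 := by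
  refine ⟨fun h => ⟨h.1, (len_le_of_ple h.1).lt_of_ne fun hlen => ?_⟩,
    fun h => ⟨h.1, fun hba => h.2.not_ge (len_le_of_ple hba)⟩⟩
  exact h.2 (eq_of_ple_of_len_le h.1 hlen.ge ▸ ple_refl a)

lemma plt_of_ple_of_plt {a b c : PermPt} (hab : ple a b) (hbc : plt b c) : plt a c := by
  rw [plt_iff_ple_and_len_lt] at hbc ⊢
  exact ⟨ple_trans hab hbc.1, (len_le_of_ple hab).trans_lt hbc.2⟩

lemma plt_of_plt_of_ple {a b c : PermPt} (hab : plt a b) (hbc : ple b c) : plt a c := by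
  rw [plt_iff_ple_and_len_lt] at hab ⊢
  exact ⟨ple_trans hab.1 hbc, hab.2.trans_le (len_le_of_ple hbc)⟩

-- Values read at natural-number positions, so that blocks of a direct sum need no `Fin` casts.
def pval (a : PermPt) (i : ℕ) : ℕ := if h : i < a.1 then a.2 ⟨i, h⟩ else a.1

lemma pval_of_lt {a : PermPt} {i : ℕ} (h : i < a.1) : pval a i = a.2 ⟨i, h⟩ := dif_pos h

lemma pval_lt {a : PermPt} {i : ℕ} (h : i < a.1) : pval a i < a.1 := by
  simp [pval, h]

lemma pval_inj {a : PermPt} {i j : ℕ} (hi : i < a.1) (hj : j < a.1) :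
    pval a i = pval a j ↔ i = j := by
  simp [pval, hi, hj, Fin.val_inj]

lemma ext_pval {a b : PermPt} (hlen : a.1 = b.1) (h : ∀ i < a.1, pval a i = pval b i) :
    a = b := by
  obtain ⟨n, p⟩ := a
  obtain ⟨m, q⟩ := b
  obtain rfl : n = m := hlen
  congr
  ext i
  simpa [pval] using h i i.2

structure IsPvalEmbedding (a b : PermPt) (F : ℕ → ℕ) : Prop where
  lt_len : ∀ i < a.1, F i < b.1
  lt : ∀ i < a.1, ∀ j < a.1, i < j → F i < F j
  le_iff : ∀ i < a.1, ∀ j < a.1, (pval a i ≤ pval a j ↔ pval b (F i) ≤ pval b (F j))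

lemma ple_iff_exists_pval {a b : PermPt} : ple a b ↔ ∃ F, IsPvalEmbedding a b F := by
  constructor
  · rintro ⟨f, hf, hord⟩
    refine ⟨fun i => if h : i < a.1 then f ⟨i, h⟩ else b.1, fun i hi => by simp [hi],
      fun i hi j hj hij => by simpa [hi, hj] using hf (Fin.mk_lt_mk.mpr hij),
      fun i hi j hj => ?_⟩
    simpa [hi, hj, pval] using hord ⟨i, hi⟩ ⟨j, hj⟩
  · rintro ⟨F, hFb, hF, hord⟩
    refine ⟨fun i => (⟨F i, hFb i i.2⟩ : Fin b.1), fun i j hij => hF i i.2 j j.2 hij, fun i j => ?_⟩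
    have := hord i i.2 j j.2
    simp only [pval, dif_pos i.2, dif_pos j.2, dif_pos (hFb i i.2), dif_pos (hFb j j.2)] at this
    exact this

lemma forall_lt_add_iff {m n : ℕ} {P : ℕ → Prop} :
    (∀ i < m + n, P i) ↔ (∀ i < m, P i) ∧ ∀ j < n, P (m + j) := by
  refine ⟨fun h => ⟨fun i hi => h i (by omega), fun j hj => h _ (by omega)⟩, ?_⟩
  rintro ⟨hlo, hhi⟩ i hi
  by_cases him : i < m
  · exact hlo i him
  · obtain ⟨j, rfl⟩ := Nat.exists_eq_add_of_le (not_lt.mp him)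
    exact hhi j (by omega)

lemma exists_lt_iff_lt_of_strictMonoOn {N c : ℕ} {F : ℕ → ℕ}
    (hF : ∀ i < N, ∀ j < N, i < j → F i < F j) : ∃ k ≤ N, ∀ i < N, (F i < c ↔ i < k) := by
  have hex : ∃ k, k = N ∨ (k < N ∧ c ≤ F k) := ⟨N, Or.inl rfl⟩
  refine ⟨Nat.find hex, Nat.find_min' hex (Or.inl rfl), fun i hi => ⟨fun hFi => ?_, fun hik => ?_⟩⟩
  · by_contra hki
    rcases Nat.find_spec hex with hN | ⟨hkN, hck⟩
    · omega
    · rcases (not_lt.mp hki).lt_or_eq with hlt | heq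
      · have := hF _ hkN i hi hlt
        omega
      · rw [heq] at hck
        omega
  · have := Nat.find_min hex hik
    push Not at this
    exact this.2 hi

lemma pdsP_len (a b : PermPt) : (pdsP a b).1 = a.1 + b.1 := rfl

@[simp] lemma pds_castAdd {m n : ℕ} (p : Equiv.Perm (Fin m)) (q : Equiv.Perm (Fin n)) (i : Fin m) :
    pds p q (Fin.castAdd n i) = Fin.castAdd n (p i) := by
  simp [pds]

@[simp] lemma pds_natAdd {m n : ℕ} (p : Equiv.Perm (Fin m)) (q : Equiv.Perm (Fin n)) (j : Fin n) :
    pds p q (Fin.natAdd m j) = Fin.natAdd m (q j) := by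
  simp [pds]

@[simp] lemma val_pss_castAdd {m n : ℕ} (p : Equiv.Perm (Fin m)) (q : Equiv.Perm (Fin n))
    (i : Fin m) : (pss p q (Fin.castAdd n i) : ℕ) = n + p i := by
  simp [pss, Nat.add_comm]

@[simp] lemma val_pss_natAdd {m n : ℕ} (p : Equiv.Perm (Fin m)) (q : Equiv.Perm (Fin n))
    (j : Fin n) : (pss p q (Fin.natAdd m j) : ℕ) = q j := by
  simp [pss]

lemma pval_pdsP_of_lt {a b : PermPt} {i : ℕ} (h : i < a.1) : pval (pdsP a b) i = pval a i := by
  rw [pval_of_lt (show i < (pdsP a b).1 by simp only [pdsP]; omega), pval_of_lt h]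
  exact congrArg Fin.val (pds_castAdd a.2 b.2 ⟨i, h⟩)

lemma pval_pdsP_add {a b : PermPt} {j : ℕ} (h : j < b.1) :
    pval (pdsP a b) (a.1 + j) = a.1 + pval b j := by
  rw [pval_of_lt (show a.1 + j < (pdsP a b).1 by simp only [pdsP]; omega), pval_of_lt h]
  exact congrArg Fin.val (pds_natAdd a.2 b.2 ⟨j, h⟩)

lemma pval_pssP_of_lt {a b : PermPt} {i : ℕ} (h : i < a.1) :
    pval (pssP a b) i = b.1 + pval a i := by
  rw [pval_of_lt (show i < (pssP a b).1 by simp only [pssP]; omega), pval_of_lt h]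
  exact val_pss_castAdd a.2 b.2 ⟨i, h⟩

lemma pval_pssP_add {a b : PermPt} {j : ℕ} (h : j < b.1) :
    pval (pssP a b) (a.1 + j) = pval b j := by
  rw [pval_of_lt (show a.1 + j < (pssP a b).1 by simp only [pssP]; omega), pval_of_lt h]
  exact val_pss_natAdd a.2 b.2 ⟨j, h⟩

lemma pdsP_assoc (a b c : PermPt) : pdsP (pdsP a b) c = pdsP a (pdsP b c) := by
  refine ext_pval (Nat.add_assoc _ _ _) ?_
  simp only [pdsP_len, forall_lt_add_iff]
  refine ⟨⟨fun i hi => ?_, fun j hj => ?_⟩, fun j hj => ?_⟩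
  · rw [pval_pdsP_of_lt (by rw [pdsP_len]; omega), pval_pdsP_of_lt hi, pval_pdsP_of_lt hi]
  · rw [pval_pdsP_of_lt (by rw [pdsP_len]; omega), pval_pdsP_add hj,
      pval_pdsP_add (by rw [pdsP_len]; omega), pval_pdsP_of_lt hj]
  · rw [← pdsP_len, pval_pdsP_add hj, pdsP_len, Nat.add_assoc a.1 b.1 j,
      pval_pdsP_add (show b.1 + j < (pdsP b c).1 by rw [pdsP_len]; omega), pval_pdsP_add hj]
    omega

lemma pdsP_right_injective (a : PermPt) : Function.Injective (pdsP a) := by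
  intro b c h
  have hlen : b.1 = c.1 := by simpa [pdsP_len] using congrArg Sigma.fst h
  refine ext_pval hlen fun j hj => ?_
  have := pval_pdsP_add (a := a) hj
  rw [h, pval_pdsP_add (hlen ▸ hj)] at this
  omega

lemma pdsP_left_injective (b : PermPt) : Function.Injective (pdsP · b) := by
  intro a c h
  have hlen : a.1 = c.1 := by simpa [pdsP_len] using congrArg Sigma.fst h
  refine ext_pval hlen fun i hi => ?_
  have := pval_pdsP_of_lt (b := b) hi
  rwa [show pdsP a b = pdsP c b from h, pval_pdsP_of_lt (hlen ▸ hi), eq_comm] at this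

lemma eq_pempty {a : PermPt} (h : a.1 = 0) : a = pempty :=
  ext_pval h fun _ _ => by omega

lemma pdsP_pempty (a : PermPt) : pdsP a pempty = a :=
  ext_pval rfl fun _ hi => pval_pdsP_of_lt hi

lemma pempty_pdsP (a : PermPt) : pdsP pempty a = a := by
  refine ext_pval (Nat.zero_add _) fun i hi => ?_
  have := pval_pdsP_add (a := pempty) (show i < a.1 by simpa [pdsP_len, pempty] using hi)
  simpa [pempty] using this

lemma pdsP_ple_pdsP {a a' b b' : PermPt} (ha : ple a a') (hb : ple b b') :
    ple (pdsP a b) (pdsP a' b') := by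
  rw [ple_iff_exists_pval] at ha hb ⊢
  obtain ⟨F, hFb, hFm, hFo⟩ := ha
  obtain ⟨G, hGb, hGm, hGo⟩ := hb
  refine ⟨fun i => if i < a.1 then F i else a'.1 + G (i - a.1), ?_, ?_, ?_⟩ <;>
    simp +contextual only [pdsP_len, forall_lt_add_iff, add_lt_iff_neg_left, not_lt_zero,
      if_false, if_true, Nat.add_sub_cancel_left, add_lt_add_iff_left, add_le_add_iff_left,
      pval_pdsP_of_lt, pval_pdsP_add, hFb, hGb, implies_true, and_true]
  · exact fun i hi => by have := hFb i hi; omega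
  · exact ⟨fun i hi => ⟨hFm i hi, fun j _ _ => by have := hFb i hi; omega⟩,
      fun j hj => ⟨fun i hi _ => by omega, hGm j hj⟩⟩
  · refine ⟨fun i hi => ⟨hFo i hi, fun j hj => ?_⟩, fun j hj => ⟨fun i hi => ?_, hGo j hj⟩⟩
    all_goals
      have := pval_lt hi
      have := pval_lt (hFb i hi)
      constructor <;> intro <;> omega

lemma pempty_ple (a : PermPt) : ple pempty a :=
  ⟨Fin.elim0, fun i => i.elim0, fun i => i.elim0⟩

lemma ple_pdsP_left (a b : PermPt) : ple a (pdsP a b) := by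
  simpa only [pdsP_pempty] using pdsP_ple_pdsP (ple_refl a) (pempty_ple b)

lemma pone_ple {a : PermPt} (h : 0 < a.1) : ple pone a :=
  have hsub : ∀ i j : Fin pone.1, i = j := Subsingleton.elim (α := Fin 1)
  ⟨fun _ => ⟨0, h⟩, fun i j hij => absurd hij (hsub i j ▸ lt_irrefl i),
    fun i j => by simp [hsub i j]⟩

noncomputable def ofPval (n : ℕ) (f : ℕ → ℕ) (hf : ∀ i < n, f i < n)
    (hinj : ∀ i < n, ∀ j < n, f i = f j → i = j) : PermPt :=
  ⟨n, Equiv.ofBijective (fun i => ⟨f i, hf i i.2⟩) <| Finite.injective_iff_bijective.mp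
    fun i j hij => Fin.ext (hinj i i.2 j j.2 (congrArg Fin.val hij))⟩

lemma pval_ofPval {n : ℕ} {f : ℕ → ℕ} {hf : ∀ i < n, f i < n}
    {hinj : ∀ i < n, ∀ j < n, f i = f j → i = j} {i : ℕ} (h : i < n) :
    pval (ofPval n f hf hinj) i = f i :=
  pval_of_lt (a := ofPval n f hf hinj) h

lemma pval_lt_iff_of_pval_lt_pval {x : PermPt} {k : ℕ}
    (h : ∀ i < k, ∀ j < x.1, k ≤ j → pval x i < pval x j) {i : ℕ} (hi : i < x.1) :
    pval x i < k ↔ i < k := by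
  have hinj : ∀ l < x.1, ∀ m < x.1, pval x l = pval x m → l = m :=
    fun l hl m hm => (pval_inj hl hm).mp
  constructor
  · intro hxi
    by_contra hki
    have hcard := Finset.card_le_card_of_injOn (pval x) (s := Finset.range k)
      (t := Finset.range (pval x i))
      (fun l hl => by
        simp only [Finset.coe_range, Set.mem_Iio] at hl ⊢
        exact h l hl i hi (by omega))
      (fun l hl m hm => hinj l (by simp at hl; omega) m (by simp at hm; omega))
    rw [Finset.card_range, Finset.card_range] at hcard
    omega
  · intro hik
    have hcard := Finset.card_le_card_of_injOn (pval x) (s := Finset.Ico k x.1)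
      (t := Finset.Ioo (pval x i) x.1)
      (fun l hl => by
        simp only [Finset.coe_Ico, Set.mem_Ico, Finset.coe_Ioo, Set.mem_Ioo] at hl ⊢
        exact ⟨h i hik l hl.2 hl.1, pval_lt hl.2⟩)
      (fun l hl m hm => hinj l (by simp at hl; omega) m (by simp at hm; omega))
    rw [Nat.card_Ico, Nat.card_Ioo] at hcard
    have := pval_lt hi
    omega

lemma exists_eq_pdsP_of_pval_lt_pval {x : PermPt} {k : ℕ} (hk : k ≤ x.1)
    (h : ∀ i < k, ∀ j < x.1, k ≤ j → pval x i < pval x j) :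
    ∃ y z, x = pdsP y z ∧ y.1 = k := by
  have hcut := fun {i} (hi : i < x.1) => pval_lt_iff_of_pval_lt_pval h hi
  have hinj : ∀ l < x.1, ∀ m < x.1, pval x l = pval x m → l = m :=
    fun l hl m hm => (pval_inj hl hm).mp
  let y := ofPval k (pval x) (fun i hi => (hcut (by omega)).mpr hi)
    (fun l hl m hm => hinj l (by omega) m (by omega))
  let z := ofPval (x.1 - k) (fun j => pval x (k + j) - k)
    (fun j hj => by have := pval_lt (a := x) (i := k + j) (by omega); omega)
    (fun l hl m hm hlm => by
      have := (hcut (i := k + l) (by omega)).not.mpr (by omega)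
      have := (hcut (i := k + m) (by omega)).not.mpr (by omega)
      have := hinj (k + l) (by omega) (k + m) (by omega) (by omega)
      omega)
  refine ⟨y, z, ext_pval (show x.1 = k + (x.1 - k) by omega) ?_, rfl⟩
  rw [show x.1 = k + (x.1 - k) by omega, forall_lt_add_iff]
  refine ⟨fun i hi => ?_, fun j hj => ?_⟩
  · rw [pval_pdsP_of_lt (a := y) hi, pval_ofPval hi]
  · change pval x (k + j) = pval (pdsP y z) (y.1 + j)
    rw [pval_pdsP_add (show j < z.1 from hj), pval_ofPval hj]
    have := (hcut (i := k + j) (by omega)).not.mpr (by omega)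
    change _ = k + (pval x (k + j) - k)
    omega

lemma exists_eq_pdsP_of_pdsP_eq_pdsP {a b c d : PermPt} (h : pdsP a b = pdsP c d)
    (hac : a.1 ≤ c.1) : ∃ m, c = pdsP a m ∧ b = pdsP m d := by
  have hv : ∀ i < c.1, pval c i = pval (pdsP a b) i := fun i hi => by
    rw [h, pval_pdsP_of_lt hi]
  have hlen : a.1 + b.1 = c.1 + d.1 := congrArg Sigma.fst h
  obtain ⟨y, m, rfl, hy⟩ := exists_eq_pdsP_of_pval_lt_pval hac fun i hi j hj hij => by
    obtain ⟨j, rfl⟩ := Nat.exists_eq_add_of_le hij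
    rw [hv i (by omega), hv _ hj, pval_pdsP_of_lt hi, pval_pdsP_add (by omega)]
    have := pval_lt hi
    omega
  obtain rfl : y = a := ext_pval hy fun i hi => by
    rw [← pval_pdsP_of_lt (b := m) hi, hv i (by rw [pdsP_len]; omega), pval_pdsP_of_lt (by omega)]
  exact ⟨m, rfl, pdsP_right_injective y (by rw [h, pdsP_assoc])⟩

lemma IsPvalEmbedding.ple_left {x₁ x₂ u v : PermPt} {F : ℕ → ℕ}
    (hF : IsPvalEmbedding (pdsP x₁ x₂) (pdsP u v) F) (h : ∀ i < x₁.1, F i < u.1) : ple x₁ u := by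
  refine ple_iff_exists_pval.mpr ⟨F, h, fun i hi j hj => hF.lt i (by rw [pdsP_len]; omega) j
    (by rw [pdsP_len]; omega), fun i hi j hj => ?_⟩
  have := hF.le_iff i (by rw [pdsP_len]; omega) j (by rw [pdsP_len]; omega)
  rwa [pval_pdsP_of_lt hi, pval_pdsP_of_lt hj, pval_pdsP_of_lt (h i hi),
    pval_pdsP_of_lt (h j hj)] at this

lemma IsPvalEmbedding.ple_right {x₁ x₂ u v : PermPt} {F : ℕ → ℕ}
    (hF : IsPvalEmbedding (pdsP x₁ x₂) (pdsP u v) F) (h : ∀ j < x₂.1, u.1 ≤ F (x₁.1 + j)) :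
    ple x₂ v := by
  obtain ⟨hFb, hFm, hFo⟩ := hF
  simp only [pdsP_len] at hFb hFm hFo
  refine ple_iff_exists_pval.mpr ⟨fun j => F (x₁.1 + j) - u.1, fun j hj => ?_,
    fun i hi j hj hij => ?_, fun i hi j hj => ?_⟩
  · have := hFb (x₁.1 + j) (by omega)
    have := h j hj
    omega
  · have := hFm (x₁.1 + i) (by omega) (x₁.1 + j) (by omega) (by omega)
    have := h i hi
    omega
  · obtain ⟨l, hl⟩ := Nat.exists_eq_add_of_le (h i hi)
    obtain ⟨m, hm⟩ := Nat.exists_eq_add_of_le (h j hj)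
    have hlm : l < v.1 ∧ m < v.1 := by
      have := hFb (x₁.1 + i) (by omega)
      have := hFb (x₁.1 + j) (by omega)
      omega
    have := hFo (x₁.1 + i) (by omega) (x₁.1 + j) (by omega)
    rw [pval_pdsP_add hi, pval_pdsP_add hj, hl, hm, pval_pdsP_add hlm.1,
      pval_pdsP_add hlm.2] at this
    simpa [hl, hm] using this

lemma exists_eq_pdsP_of_ple_pdsP {x u v : PermPt} (h : ple x (pdsP u v)) :
    ∃ x₁ x₂, x = pdsP x₁ x₂ ∧ ple x₁ u ∧ ple x₂ v := by
  obtain ⟨F, hF⟩ := ple_iff_exists_pval.mp h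
  obtain ⟨k, hk, hkF⟩ := exists_lt_iff_lt_of_strictMonoOn (c := u.1) hF.lt
  have hFu : ∀ j < x.1, k ≤ j → u.1 ≤ F j := fun j hj hkj => by
    have := (hkF j hj).not.mpr (by omega)
    omega
  obtain ⟨x₁, x₂, rfl, rfl⟩ := exists_eq_pdsP_of_pval_lt_pval hk fun i hi j hj hij => by
    have hFi := (hkF i (by omega)).mpr hi
    obtain ⟨l, hl⟩ := Nat.exists_eq_add_of_le (hFu j hj hij)
    have := (hF.le_iff j hj i (by omega)).not.mpr
    rw [hl, pval_pdsP_of_lt hFi,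
      pval_pdsP_add (by have := hF.lt_len j hj; rw [pdsP_len] at this; omega)] at this
    have := pval_lt hFi
    omega
  simp only [pdsP_len] at hkF hFu
  exact ⟨x₁, x₂, rfl, hF.ple_left fun i hi => (hkF i (by omega)).mpr hi,
    hF.ple_right fun j hj => hFu _ (by omega) (by omega)⟩

lemma ple_pdsP_pdsP {a b c d : PermPt} (h : ple (pdsP a b) (pdsP c d)) :
    (∃ b₁ b₂, b = pdsP b₁ b₂ ∧ ple (pdsP a b₁) c ∧ ple b₂ d) ∨
      ∃ a₁ a₂, a = pdsP a₁ a₂ ∧ ple a₁ c ∧ ple (pdsP a₂ b) d := by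
  obtain ⟨x₁, x₂, hx, h₁, h₂⟩ := exists_eq_pdsP_of_ple_pdsP h
  rcases le_total a.1 x₁.1 with hle | hle
  · obtain ⟨m, rfl, rfl⟩ := exists_eq_pdsP_of_pdsP_eq_pdsP hx hle
    exact Or.inl ⟨m, x₂, rfl, h₁, h₂⟩
  · obtain ⟨m, rfl, rfl⟩ := exists_eq_pdsP_of_pdsP_eq_pdsP hx.symm hle
    exact Or.inr ⟨x₁, m, rfl, h₁, h₂⟩

lemma pdsP_ple_pdsP_iff {a b c : PermPt} : ple (pdsP a c) (pdsP b c) ↔ ple a b := by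
  refine ⟨fun h => ?_, fun h => pdsP_ple_pdsP h (ple_refl c)⟩
  rcases ple_pdsP_pdsP h with ⟨c₁, -, -, h₁, -⟩ | ⟨a₁, a₂, rfl, h₁, h₂⟩
  · exact ple_trans (ple_pdsP_left a c₁) h₁
  · have := len_le_of_ple h₂
    rwa [eq_pempty (show a₂.1 = 0 by simp only [pdsP_len] at this; omega), pdsP_pempty]

lemma pdsP_plt_pdsP_iff {a b c : PermPt} : plt (pdsP a c) (pdsP b c) ↔ plt a b := by
  simp only [plt_iff_ple_and_len_lt, pdsP_ple_pdsP_iff, pdsP_len, add_lt_add_iff_right]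

lemma plt_pdsP_pone (a : PermPt) : plt a (pdsP a pone) :=
  plt_iff_ple_and_len_lt.mpr ⟨ple_pdsP_left a pone, by simp [pdsP_len, pone]⟩

lemma eq_or_exists_of_pdsP_ple_pdsP {a b c d : PermPt} (h : ple (pdsP a b) (pdsP c d))
    (hdb : ple d b) :
    d = b ∨ ∃ b₁ b₂, b = pdsP b₁ b₂ ∧ 0 < b₁.1 ∧ ple (pdsP a b₁) c ∧ ple b₂ d := by
  rcases ple_pdsP_pdsP h with ⟨b₁, b₂, rfl, h₁, h₂⟩ | ⟨a₁, a₂, rfl, -, h₂⟩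
  · rcases Nat.eq_zero_or_pos b₁.1 with h0 | h0
    · rw [eq_pempty h0, pempty_pdsP] at hdb ⊢
      exact Or.inl (eq_of_ple_of_len_le hdb (len_le_of_ple h₂))
    · exact Or.inr ⟨b₁, b₂, rfl, h0, h₁, h₂⟩
  · have := len_le_of_ple h₂
    simp only [pdsP_len] at this
    exact Or.inl (eq_of_ple_of_len_le hdb (by omega))

def openInterval (σ τ : PermPt) : Set PermPt := {π | plt σ π ∧ plt π τ}

lemma pdsP_mem_openInterval_iff {σ τ ρ α : PermPt} :
    pdsP ρ α ∈ openInterval (pdsP σ α) (pdsP τ α) ↔ ρ ∈ openInterval σ τ := by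
  simp only [openInterval, Set.mem_ofPred_eq, pdsP_plt_pdsP_iff]

-- `X` is a union of connected components of the comparability graph on `S`.
def IsClosedUnderComparability (S X : Set PermPt) : Prop :=
  X ⊆ S ∧ ∀ π ∈ X, ∀ ρ ∈ S, ple π ρ ∨ ple ρ π → ρ ∈ X

lemma IsClosedUnderComparability.diff {S X : Set PermPt} (h : IsClosedUnderComparability S X) :
    IsClosedUnderComparability S (S \ X) :=
  ⟨Set.sdiff_subset, fun π hπ ρ hρ hcomp => ⟨hρ, fun hρX => hπ.2 (h.2 ρ hρX π hπ.1 hcomp.symm)⟩⟩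

lemma disconn_iff {S : Set PermPt} :
    Disconn S ↔ ∃ X, IsClosedUnderComparability S X ∧ X.Nonempty ∧ (S \ X).Nonempty := by
  constructor
  · rintro ⟨A, B, rfl, hA, ⟨b, hb⟩, hsep⟩
    refine ⟨A, ⟨Set.subset_union_left, fun π hπ ρ hρ hcomp => ?_⟩, hA,
      ⟨b, Or.inr hb, fun hbA => (hsep b hbA b hb).1 (ple_refl b)⟩⟩
    rcases hρ with hρ | hρ
    · exact hρ
    · exact absurd hcomp (not_or.mpr (hsep π hπ ρ hρ))
  · rintro ⟨X, hX, hXne, hYne⟩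
    exact ⟨X, S \ X, Set.union_sdiff_cancel hX.1, hXne, hYne,
      fun x hx y hy => not_or.mp fun hcomp => hy.2 (hX.2 x hx y hy.1 hcomp)⟩

section DirectSumRight

variable {σ τ : PermPt} {X : Set PermPt}

lemma not_pdsP_pone_ple_of_mem (hX : IsClosedUnderComparability (openInterval σ τ) X)
    (hσX : pdsP σ pone ∉ X) {π : PermPt} (hπ : π ∈ X) : ¬ ple (pdsP σ pone) π := fun h =>
  hσX <| hX.2 π hπ _ ⟨plt_pdsP_pone σ, plt_of_ple_of_plt h (hX.1 hπ).2⟩ (Or.inr h)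

lemma not_plt_pdsP_pone_of_mem (hX : IsClosedUnderComparability (openInterval σ τ) X)
    (hσX : pdsP σ pone ∉ X) {π : PermPt} (hπ : π ∈ X) : ¬ plt (pdsP π pone) τ := fun h => by
  have hπ1 : pdsP π pone ∈ X := hX.2 π hπ _
    ⟨plt_of_plt_of_ple (hX.1 hπ).1 (ple_pdsP_left π pone), h⟩ (Or.inl (ple_pdsP_left π pone))
  exact not_pdsP_pone_ple_of_mem hX hσX hπ1 (pdsP_ple_pdsP (hX.1 hπ).1.1 (ple_refl pone))

-- Leaving the image of `X` above `π ⊕ α` would need `π ⊕ 1 < τ`, which the choice of `X`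
-- forbids; in the boundary case `π ⊕ 1 = τ` the element is `π ⊕ α` itself.
lemma mem_image_of_pdsP_ple (hX : IsClosedUnderComparability (openInterval σ τ) X)
    (hσX : pdsP σ pone ∉ X) {π ρ α : PermPt} (hπ : π ∈ X)
    (hρ : ρ ∈ openInterval (pdsP σ α) (pdsP τ α)) (h : ple (pdsP π α) ρ) :
    ρ ∈ (pdsP · α) '' X := by
  obtain ⟨ρ₁, ρ₂, rfl, h₁, h₂⟩ := exists_eq_pdsP_of_ple_pdsP hρ.2.1
  rcases eq_or_exists_of_pdsP_ple_pdsP h h₂ with rfl | ⟨α₁, α₂, rfl, hα₁, hπα₁, hα₂⟩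
  · exact ⟨ρ₁, hX.2 π hπ ρ₁ (pdsP_mem_openInterval_iff.mp hρ)
      (Or.inl (pdsP_ple_pdsP_iff.mp h)), rfl⟩
  have hπτ : ple (pdsP π pone) τ :=
    ple_trans (pdsP_ple_pdsP (ple_refl π) (pone_ple hα₁)) (ple_trans hπα₁ h₁)
  have hτ : τ.1 ≤ π.1 + 1 := not_lt.mp fun hlt => not_plt_pdsP_pone_of_mem hX hσX hπ
    (plt_iff_ple_and_len_lt.mpr ⟨hπτ, by simpa [pdsP_len, pone] using hlt⟩)
  have hρτ := (plt_iff_ple_and_len_lt.mp hρ.2).2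
  have := len_le_of_ple hπα₁
  have := len_le_of_ple h₁
  have := len_le_of_ple hα₂
  simp only [pdsP_len] at *
  obtain rfl : pdsP π α₁ = ρ₁ := eq_of_ple_of_len_le hπα₁ (by simp only [pdsP_len]; omega)
  obtain rfl : α₂ = ρ₂ := eq_of_ple_of_len_le hα₂ (by omega)
  exact ⟨π, hπ, (pdsP_assoc π α₁ α₂).symm⟩

lemma mem_image_of_ple_pdsP (hX : IsClosedUnderComparability (openInterval σ τ) X)
    (hσX : pdsP σ pone ∉ X) {π ρ α : PermPt} (hπ : π ∈ X)
    (hρ : ρ ∈ openInterval (pdsP σ α) (pdsP τ α)) (h : ple ρ (pdsP π α)) :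
    ρ ∈ (pdsP · α) '' X := by
  obtain ⟨ρ₁, ρ₂, rfl, h₁, h₂⟩ := exists_eq_pdsP_of_ple_pdsP h
  rcases eq_or_exists_of_pdsP_ple_pdsP hρ.1.1 h₂ with rfl | ⟨α₁, α₂, rfl, hα₁, hσα₁, -⟩
  · exact ⟨ρ₁, hX.2 π hπ ρ₁ (pdsP_mem_openInterval_iff.mp hρ) (Or.inr h₁), rfl⟩
  · exact absurd (ple_trans (pdsP_ple_pdsP (ple_refl σ) (pone_ple hα₁)) (ple_trans hσα₁ h₁))
      (not_pdsP_pone_ple_of_mem hX hσX hπ)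

lemma isClosedUnderComparability_image_pdsP
    (hX : IsClosedUnderComparability (openInterval σ τ) X) (hσX : pdsP σ pone ∉ X)
    (α : PermPt) :
    IsClosedUnderComparability (openInterval (pdsP σ α) (pdsP τ α)) ((pdsP · α) '' X) := by
  refine ⟨Set.image_subset_iff.mpr fun π hπ => pdsP_mem_openInterval_iff.mpr (hX.1 hπ), ?_⟩
  rintro _ ⟨π, hπ, rfl⟩ ρ hρ (h | h)
  exacts [mem_image_of_pdsP_ple hX hσX hπ hρ h, mem_image_of_ple_pdsP hX hσX hπ hρ h]

end DirectSumRight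

theorem disconn_pdsP_right {σ τ : PermPt} (h : Disconn (openInterval σ τ)) (α : PermPt) :
    Disconn (openInterval (pdsP σ α) (pdsP τ α)) := by
  obtain ⟨X, hX, hXne, hYne⟩ := disconn_iff.mp h
  wlog hσX : pdsP σ pone ∉ X generalizing X
  · refine this _ hX.diff hYne ?_ fun hσ => hσ.2 (not_not.mp hσX)
    rwa [Set.sdiff_sdiff_cancel_left hX.1]
  refine disconn_iff.mpr ⟨_, isClosedUnderComparability_image_pdsP hX hσX α, hXne.image _, ?_⟩
  obtain ⟨π, hπI, hπX⟩ := hYne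
  refine ⟨pdsP π α, pdsP_mem_openInterval_iff.mpr hπI, ?_⟩
  rintro ⟨π', hπ', hπ'π⟩
  exact hπX (pdsP_left_injective α hπ'π ▸ hπ')

def pcomplement (a : PermPt) : PermPt := ⟨a.1, a.2.trans Fin.revPerm⟩

def preverse (a : PermPt) : PermPt := ⟨a.1, Fin.revPerm.trans a.2⟩

lemma pcomplement_pcomplement (a : PermPt) : pcomplement (pcomplement a) = a :=
  congrArg (Sigma.mk a.1) (Equiv.ext fun i => Fin.rev_rev (a.2 i))

lemma preverse_preverse (a : PermPt) : preverse (preverse a) = a :=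
  congrArg (Sigma.mk a.1) (Equiv.ext fun i => congrArg a.2 (Fin.rev_rev i))

lemma pval_pcomplement {a : PermPt} {i : ℕ} (h : i < a.1) :
    pval (pcomplement a) i = a.1 - 1 - pval a i := by
  rw [pval_of_lt (a := pcomplement a) h, pval_of_lt h]
  change ((a.2 ⟨i, h⟩).rev : ℕ) = _
  rw [Fin.val_rev]
  omega

lemma pval_preverse {a : PermPt} {i : ℕ} (h : i < a.1) :
    pval (preverse a) i = pval a (a.1 - 1 - i) := by
  rw [pval_of_lt (a := preverse a) h, pval_of_lt (show a.1 - 1 - i < a.1 by omega)]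
  change (a.2 (Fin.rev ⟨i, h⟩) : ℕ) = _
  rw [show Fin.rev ⟨i, h⟩ = ⟨a.1 - 1 - i, by omega⟩ from
    Fin.ext (by simp only [Fin.val_rev]; omega)]

lemma ple_pcomplement {a b : PermPt} (h : ple a b) : ple (pcomplement a) (pcomplement b) := by
  obtain ⟨f, hf, hord⟩ := h
  refine ⟨f, hf, fun i j => ?_⟩
  change (a.2 i).rev ≤ (a.2 j).rev ↔ (b.2 (f i)).rev ≤ (b.2 (f j)).rev
  simpa only [Fin.rev_le_rev] using hord j i

lemma ple_preverse {a b : PermPt} (h : ple a b) : ple (preverse a) (preverse b) := by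
  obtain ⟨f, hf, hord⟩ := h
  refine ⟨fun i => (f i.rev).rev, fun i j hij => Fin.rev_lt_rev.mpr (hf (Fin.rev_lt_rev.mpr hij)),
    fun i j => ?_⟩
  change a.2 i.rev ≤ a.2 j.rev ↔ b.2 (f i.rev).rev.rev ≤ b.2 (f j.rev).rev.rev
  simpa only [Fin.rev_rev] using hord i.rev j.rev

lemma pcomplement_pdsP (a b : PermPt) :
    pcomplement (pdsP a b) = pssP (pcomplement a) (pcomplement b) := by
  refine ext_pval rfl ?_
  change ∀ i < a.1 + b.1, _
  rw [forall_lt_add_iff]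
  refine ⟨fun i hi => ?_, fun j hj => ?_⟩
  · have := pval_lt hi
    rw [pval_pcomplement (show i < (pdsP a b).1 by rw [pdsP_len]; omega), pval_pdsP_of_lt hi,
      pval_pssP_of_lt (show i < (pcomplement a).1 from hi), pval_pcomplement hi]
    change a.1 + b.1 - 1 - _ = b.1 + _
    omega
  · have := pval_lt hj
    rw [pval_pcomplement (show a.1 + j < (pdsP a b).1 by rw [pdsP_len]; omega), pval_pdsP_add hj,
      show pval (pssP (pcomplement a) (pcomplement b)) (a.1 + j) = pval (pcomplement b) j from
        pval_pssP_add hj, pval_pcomplement hj]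
    change a.1 + b.1 - 1 - _ = _
    omega

lemma preverse_pssP (a b : PermPt) : preverse (pssP a b) = pdsP (preverse b) (preverse a) := by
  refine ext_pval (Nat.add_comm _ _) ?_
  change ∀ i < a.1 + b.1, _
  rw [Nat.add_comm, forall_lt_add_iff]
  refine ⟨fun i hi => ?_, fun j hj => ?_⟩
  · rw [pval_preverse (show i < (pssP a b).1 by change i < a.1 + b.1; omega),
      pval_pdsP_of_lt (show i < (preverse b).1 from hi), pval_preverse hi]
    change pval (pssP a b) (a.1 + b.1 - 1 - i) = _
    rw [show a.1 + b.1 - 1 - i = a.1 + (b.1 - 1 - i) by omega, pval_pssP_add (by omega)]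
  · rw [pval_preverse (show b.1 + j < (pssP a b).1 by change b.1 + j < a.1 + b.1; omega),
      show pval (pdsP (preverse b) (preverse a)) (b.1 + j) = b.1 + pval (preverse a) j from
        pval_pdsP_add hj, pval_preverse hj]
    change pval (pssP a b) (a.1 + b.1 - 1 - (b.1 + j)) = b.1 + _
    rw [show a.1 + b.1 - 1 - (b.1 + j) = a.1 - 1 - j by omega, pval_pssP_of_lt (by omega)]

lemma disconn_openInterval_map {g : PermPt → PermPt} (hg : ∀ a b, ple (g a) (g b) → ple a b)
    (hinv : Function.Involutive g) {σ τ : PermPt} (h : Disconn (openInterval σ τ)) :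
    Disconn (openInterval (g σ) (g τ)) := by
  have hle : ∀ a b, ple (g a) (g b) ↔ ple a b := fun a b =>
    ⟨hg a b, fun hab => hg _ _ (by rwa [hinv, hinv])⟩
  have hlt : ∀ a b, plt (g a) (g b) ↔ plt a b := fun a b => by simp only [plt, hle]
  obtain ⟨A, B, hAB, hA, hB, hsep⟩ := h
  refine ⟨g '' A, g '' B, ?_, hA.image g, hB.image g, ?_⟩
  · rw [← Set.image_union, hAB, Set.image_eq_preimage_of_inverse hinv.leftInverse hinv.rightInverse]
    ext ρ
    simp only [openInterval, Set.mem_preimage, Set.mem_ofPred_eq, ← hlt σ, ← hlt _ τ, hinv ρ]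
  · rintro _ ⟨a, ha, rfl⟩ _ ⟨b, hb, rfl⟩
    rw [hle, hle]
    exact hsep a ha b hb

lemma disconn_pcomplement {σ τ : PermPt} (h : Disconn (openInterval σ τ)) :
    Disconn (openInterval (pcomplement σ) (pcomplement τ)) :=
  disconn_openInterval_map
    (fun a b hab => by simpa only [pcomplement_pcomplement] using ple_pcomplement hab)
    pcomplement_pcomplement h

lemma disconn_preverse {σ τ : PermPt} (h : Disconn (openInterval σ τ)) :
    Disconn (openInterval (preverse σ) (preverse τ)) :=
  disconn_openInterval_map
    (fun a b hab => by simpa only [preverse_preverse] using ple_preverse hab)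
    preverse_preverse h

theorem disconn_pssP_right {σ τ : PermPt} (h : Disconn (openInterval σ τ)) (α : PermPt) :
    Disconn (openInterval (pssP σ α) (pssP τ α)) := by
  simpa only [pcomplement_pdsP, pcomplement_pcomplement] using
    disconn_pcomplement (disconn_pdsP_right (disconn_pcomplement h) (pcomplement α))

theorem disconn_pdsP_left {σ τ : PermPt} (h : Disconn (openInterval σ τ)) (α : PermPt) :
    Disconn (openInterval (pdsP α σ) (pdsP α τ)) := by
  simpa only [preverse_pssP, preverse_preverse] using
    disconn_preverse (disconn_pssP_right (disconn_preverse h) (preverse α))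

theorem disconn_pssP_left {σ τ : PermPt} (h : Disconn (openInterval σ τ)) (α : PermPt) :
    Disconn (openInterval (pssP α σ) (pssP α τ)) := by
  simpa only [pcomplement_pdsP, pcomplement_pcomplement] using
    disconn_pcomplement (disconn_pdsP_left (disconn_pcomplement h) (pcomplement α))

/-- If `(σ,τ)` is disconnected, then for any permutation `α` all four
augmented intervals `(α⊕σ, α⊕τ)`, `(α⊖σ, α⊖τ)`, `(σ⊕α, τ⊕α)` and
`(σ⊖α, τ⊖α)` are disconnected. -/
theorem disconn_of_four_augmentations (σ τ : PermPt)
    (h : Disconn {π | plt σ π ∧ plt π τ}) (α : PermPt) :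
    Disconn {π | plt (pdsP α σ) π ∧ plt π (pdsP α τ)} ∧
    Disconn {π | plt (pssP α σ) π ∧ plt π (pssP α τ)} ∧
    Disconn {π | plt (pdsP σ α) π ∧ plt π (pdsP τ α)} ∧
    Disconn {π | plt (pssP σ α) π ∧ plt π (pssP τ α)} :=
  ⟨disconn_pdsP_left h α, disconn_pssP_left h α, disconn_pdsP_right h α, disconn_pssP_right h α⟩
end
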